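/- arXiv:1309.7569 — 2 statements merged into one kernel-verified Lean document; each statement's English description precedes it below -/
import Mathlib

section
/- Let φ(a,b) = ₂φ₁(a,b;0;q,z) = ∑_{n≥0} ((a;q)_n (b;q)_n / (q;q)_n) z^n for |z| < 1. Then the contiguous relation q·φ(a/q, b/q) + a b z² (1−a)(1−b) φ(aq, bq) = [q − z(a+b) + a b z (1 + 1/q)] φ(a,b) holds. -/
open scoped BigOperators

/-- q-Pochhammer infinite product `(a;q)_∞`. -/
noncomputable def qp (q a : ℂ) : ℂ := ∏' n : ℕ, (1 - a * q ^ n)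

/-- q-Pochhammer `(a;q)_k`. -/
noncomputable def qpn (q a : ℂ) (k : ℕ) : ℂ := ∏ j ∈ Finset.range k, (1 - a * q ^ j)

/-- theta function `θ(x;q) = (x;q)_∞ (q/x;q)_∞`. -/
noncomputable def theta (q x : ℂ) : ℂ := qp q x * qp q (q / x)

/-- the `₁φ₁(a;b;q,z)` series. -/
noncomputable def phi11 (q a b z : ℂ) : ℂ :=
  ∑' n : ℕ, qpn q a n / (qpn q q n * qpn q b n) * (-1) ^ n * q ^ (n * (n - 1) / 2) * z ^ n

/-- the terminating `₂φ₀(q^(-n),B;—;q,z)` series (Gasper–Rahman convention). -/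
noncomputable def phi20 (q : ℂ) (n : ℕ) (B z : ℂ) : ℂ :=
  ∑ k ∈ Finset.range (n + 1),
    qpn q ((q ^ n)⁻¹) k * qpn q B k / qpn q q k * (-1) ^ k * (q ^ (k * (k - 1) / 2))⁻¹ * z ^ k

/-- the `₂φ₁(a,b;0;q,z)` series. -/
noncomputable def phi210 (q a b z : ℂ) : ℂ :=
  ∑' n : ℕ, qpn q a n * qpn q b n / qpn q q n * z ^ n

/-! The coefficient of `z ^ n` on each side is `(a;q)_{n-1} (b;q)_{n-1} / (q;q)_n` times a
polynomial in `a`, `b`, `q`, `q ^ n`, and the two polynomials coincide; so the relation holds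
term by term once the three series are shifted against each other by one and two places.
Absolute convergence is the ratio test: consecutive terms have ratio
`(1 - a q^n)(1 - b q^n) z / (1 - q^(n+1)) → z`. -/

noncomputable def phi210Term (q a b z : ℂ) (n : ℕ) : ℂ :=
  qpn q a n * qpn q b n / qpn q q n * z ^ n

lemma qpn_succ (q a : ℂ) (n : ℕ) : qpn q a (n + 1) = qpn q a n * (1 - a * q ^ n) :=
  Finset.prod_range_succ _ _

lemma qpn_succ' (q a : ℂ) (n : ℕ) : qpn q a (n + 1) = (1 - a) * qpn q (a * q) n := by
  rw [qpn, qpn, Finset.prod_range_succ', mul_comm]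
  congr 1
  · simp
  · exact Finset.prod_congr rfl fun j _ => by ring

lemma qpn_div_succ {q : ℂ} (hq : q ≠ 0) (a : ℂ) (n : ℕ) :
    qpn q (a / q) (n + 1) = (1 - a / q) * qpn q a n := by
  rw [qpn_succ', div_mul_cancel₀ a hq]

lemma one_sub_mul_pow_ne_zero {q : ℂ} (hq : ‖q‖ < 1) (j : ℕ) : 1 - q * q ^ j ≠ 0 := by
  rw [← pow_succ', sub_ne_zero]
  refine fun h => (pow_lt_one₀ (norm_nonneg q) hq j.succ_ne_zero).ne ?_
  rw [← norm_pow, ← h, norm_one]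

lemma qpn_self_ne_zero {q : ℂ} (hq : ‖q‖ < 1) (n : ℕ) : qpn q q n ≠ 0 :=
  Finset.prod_ne_zero_iff.2 fun j _ => one_sub_mul_pow_ne_zero hq j

lemma phi210Term_succ (q a b z : ℂ) (n : ℕ) :
    phi210Term q a b z (n + 1) =
      phi210Term q a b z n * ((1 - a * q ^ n) * (1 - b * q ^ n) / (1 - q * q ^ n) * z) := by
  simp only [phi210Term, qpn_succ, pow_succ]
  rw [mul_mul_mul_comm, mul_div_mul_comm, mul_mul_mul_comm]

open Filter Topology in
lemma summable_phi210Term {q : ℂ} (hq : ‖q‖ < 1) (a b : ℂ) {z : ℂ} (hz : ‖z‖ < 1) :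
    Summable (phi210Term q a b z) := by
  obtain ⟨r, hzr, hr⟩ := exists_between hz
  have hratio : Tendsto (fun n : ℕ => (1 - a * q ^ n) * (1 - b * q ^ n) / (1 - q * q ^ n) * z)
      atTop (𝓝 z) := by
    have hfactor (c : ℂ) : Tendsto (fun n : ℕ => 1 - c * q ^ n) atTop (𝓝 1) := by
      simpa using tendsto_const_nhds.sub
        ((tendsto_pow_atTop_nhds_zero_of_norm_lt_one hq).const_mul c)
    simpa using (((hfactor a).mul (hfactor b)).div (hfactor q) one_ne_zero).mul_const z
  refine summable_of_ratio_norm_eventually_le hr ?_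
  filter_upwards [hratio.norm.eventually (gt_mem_nhds hzr)] with n hn
  rw [phi210Term_succ, norm_mul, mul_comm]
  exact mul_le_mul_of_nonneg_right hn.le (norm_nonneg _)

lemma tsum_add_tsum_eq_of_shift {G : Type*} [AddCommGroup G] [TopologicalSpace G]
    [IsTopologicalAddGroup G] [T2Space G] {u v w x : ℕ → G}
    (hu : Summable u) (hv : Summable v) (hw : Summable w) (hx : Summable x)
    (head : u 0 + u 1 = w 0 + w 1 + x 0) (step : ∀ n, u (n + 2) + v n = w (n + 2) + x (n + 1)) :
    ∑' n, u n + ∑' n, v n = ∑' n, w n + ∑' n, x n := by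
  have tails : ∑' n, u (n + 2) + ∑' n, v n = ∑' n, w (n + 2) + ∑' n, x (n + 1) := by
    rw [← Summable.tsum_add ((summable_nat_add_iff 2).2 hu) hv,
      ← Summable.tsum_add ((summable_nat_add_iff 2).2 hw) ((summable_nat_add_iff 1).2 hx)]
    exact tsum_congr step
  rw [← hu.sum_add_tsum_nat_add 2, ← hw.sum_add_tsum_nat_add 2, ← hx.sum_add_tsum_nat_add 1]
  simp only [Finset.sum_range_succ, Finset.sum_range_zero, zero_add]
  rw [add_assoc, tails, head]
  abel

lemma phi210Term_contiguous_head {q : ℂ} (hq0 : q ≠ 0) (hq1 : ‖q‖ < 1) (a b z : ℂ) :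
    q * phi210Term q (a / q) (b / q) z 0 + q * phi210Term q (a / q) (b / q) z 1 =
      q * phi210Term q a b z 0 + q * phi210Term q a b z 1 +
        (-(z * (a + b)) + a * b * z * (1 + 1 / q)) * phi210Term q a b z 0 := by
  have h1 : 1 - q ≠ 0 := by simpa using one_sub_mul_pow_ne_zero hq1 0
  simp only [phi210Term, qpn, Finset.prod_range_one, Finset.prod_range_zero, pow_zero, pow_one,
    mul_one]
  field_simp
  ring

lemma phi210Term_contiguous_step {q : ℂ} (hq0 : q ≠ 0) (hq1 : ‖q‖ < 1) (a b z : ℂ) (n : ℕ) :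
    q * phi210Term q (a / q) (b / q) z (n + 2) +
        a * b * z ^ 2 * (1 - a) * (1 - b) * phi210Term q (a * q) (b * q) z n =
      q * phi210Term q a b z (n + 2) +
        (-(z * (a + b)) + a * b * z * (1 + 1 / q)) * phi210Term q a b z (n + 1) := by
  have hQ := qpn_self_ne_zero hq1 n
  have h1 := one_sub_mul_pow_ne_zero hq1 n
  have h2 := one_sub_mul_pow_ne_zero hq1 (n + 1)
  simp only [phi210Term]
  rw [qpn_div_succ hq0, qpn_div_succ hq0, qpn_succ q a (n + 1), qpn_succ q b (n + 1),
    qpn_succ q q (n + 1), qpn_succ q q n, qpn_succ' q a n, qpn_succ' q b n]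
  field_simp
  ring

/-- contiguous relation for `₂φ₁(a,b;0;q,z)`. -/
theorem phi210_contiguous (q : ℝ) (hq0 : 0 < q) (hq1 : q < 1) (a b z : ℂ)
    (hz : ‖z‖ < 1) :
    (q : ℂ) * phi210 (q : ℂ) (a / q) (b / q) z +
        a * b * z ^ 2 * (1 - a) * (1 - b) * phi210 (q : ℂ) (a * q) (b * q) z =
      ((q : ℂ) - z * (a + b) + a * b * z * (1 + 1 / (q : ℂ))) * phi210 (q : ℂ) a b z := by
  have hq0' : (q : ℂ) ≠ 0 := Complex.ofReal_ne_zero.2 hq0.ne'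
  have hq1' : ‖(q : ℂ)‖ < 1 := by rwa [Complex.norm_real, Real.norm_of_nonneg hq0.le]
  have hsum (a b : ℂ) := summable_phi210Term hq1' a b hz
  change _ * ∑' n, phi210Term q _ _ z n + _ * ∑' n, phi210Term q _ _ z n =
    _ * ∑' n, phi210Term q a b z n
  rw [show (q : ℂ) - z * (a + b) + a * b * z * (1 + 1 / (q : ℂ)) =
      q + (-(z * (a + b)) + a * b * z * (1 + 1 / (q : ℂ))) by ring,
    add_mul, ← tsum_mul_left, ← tsum_mul_left, ← tsum_mul_left, ← tsum_mul_left]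
  exact tsum_add_tsum_eq_of_shift ((hsum _ _).mul_left _) ((hsum _ _).mul_left _)
    ((hsum _ _).mul_left _) ((hsum _ _).mul_left _)
    (phi210Term_contiguous_head hq0' hq1' a b z) (phi210Term_contiguous_step hq0' hq1' a b z)
end

section
/- Normalized weight on I_q = (1/c) q^(−ℕ): with W(q^(−k)/c) = (c/d)^k q^(k(k+1)) (c q^(k+1)/d; q)_∞ (q^(k+1); q)_∞ for k ∈ ℕ, the Jackson integral evaluates as ∑_{k=0}^∞ (1/(c q^k)) W(q^(−k)/c) = (q;q)_∞ / c, i.e. ∫_{I_q} W(x) d_q x = ((1−q)/c)(q;q)_∞. -/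
open scoped BigOperators

/-- q-Pochhammer infinite product `(a;q)_∞` over the reals. -/
noncomputable def qpR (q a : ℝ) : ℝ := ∏' n : ℕ, (1 - a * q ^ n)

/-!
Put `b = c / d`. Since `(q^{k+1};q)_∞ = (q;q)_∞ / (q;q)_k`, the claim is
`∑_k b^k q^{k²} (b q^{k+1};q)_∞ / (q;q)_k = 1`. This is the limit `n → ∞` of the finite identity
`∑_{k ≤ n} [n, k]_q b^k q^{k²} (b q^{k+1};q)_{n-k} = 1`, which holds for every `b` by induction
on `n`: the q-Pascal rule `[n+1, k+1] = q^{k+1} [n, k+1] + [n, k]` turns the sum for `(n + 1, b)`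
into the sum for `(n, q b)`. The terms are dominated by `C (|b|/(1-q))^k q^{k²}`, so Tannery's
theorem justifies the limit.
-/

open Finset Filter Topology

noncomputable def qpFin (q x : ℝ) (m : ℕ) : ℝ := ∏ i ∈ range m, (1 - x * q ^ i)

section

variable {q : ℝ}

lemma qpFin_succ' (x : ℝ) (m : ℕ) : qpFin q x (m + 1) = (1 - x) * qpFin q (x * q) m := by
  simp only [qpFin, prod_range_succ', pow_zero, mul_one, pow_succ, mul_assoc, mul_comm q]
  ring

lemma abs_qpFin_le (hq0 : 0 ≤ q) (hq1 : q < 1) (x : ℝ) (m : ℕ) :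
    |qpFin q x m| ≤ Real.exp (|x| / (1 - q)) := by
  have hgeom : ∑ i ∈ range m, |x| * q ^ i ≤ |x| / (1 - q) := by
    rw [← mul_sum, div_eq_mul_inv, ← tsum_geometric_of_lt_one hq0 hq1]
    exact mul_le_mul_of_nonneg_left
      ((summable_geometric_of_lt_one hq0 hq1).sum_le_tsum _ fun i _ => by positivity)
      (abs_nonneg x)
  calc |qpFin q x m| = ∏ i ∈ range m, |1 - x * q ^ i| := abs_prod _ _
    _ ≤ ∏ i ∈ range m, (1 + |x| * q ^ i) := by
      gcongr with i
      calc |1 - x * q ^ i| ≤ |1| + |x * q ^ i| := abs_sub _ _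
        _ = 1 + |x| * q ^ i := by rw [abs_one, abs_mul, abs_of_nonneg (pow_nonneg hq0 i)]
    _ ≤ Real.exp (∑ i ∈ range m, |x| * q ^ i) :=
      Real.prod_one_add_le_exp_sum _ fun i => by positivity
    _ ≤ Real.exp (|x| / (1 - q)) := Real.exp_le_exp.2 hgeom

lemma multipliable_one_sub_mul_pow (hq : |q| < 1) (x : ℝ) :
    Multipliable fun n : ℕ => 1 - x * q ^ n := by
  simpa only [sub_eq_add_neg] using
    Real.multipliable_one_add_of_summable ((summable_geometric_of_abs_lt_one hq).mul_left x).neg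

lemma tendsto_qpFin (hq : |q| < 1) (x : ℝ) : Tendsto (qpFin q x) atTop (𝓝 (qpR q x)) :=
  (multipliable_one_sub_mul_pow hq x).hasProd.tendsto_prod_nat

lemma qpR_eq_qpFin_mul (hq : |q| < 1) (x : ℝ) (k : ℕ) :
    qpR q x = qpFin q x k * qpR q (x * q ^ k) := by
  have hshift : (fun n => 1 - x * q ^ (n + k)) = fun n => 1 - x * q ^ k * q ^ n := by
    ext n; ring
  have h := Multipliable.prod_mul_tprod_nat_mul' (f := fun n => 1 - x * q ^ n) (k := k)
    (hshift ▸ multipliable_one_sub_mul_pow hq (x * q ^ k))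
  rw [qpR, qpR, qpFin, ← h, hshift]

lemma qpFin_self_pos (hq0 : 0 ≤ q) (hq1 : q < 1) (k : ℕ) : 0 < qpFin q q k :=
  prod_pos fun i _ => by
    have : q * q ^ i < 1 := by rw [← pow_succ']; exact pow_lt_one₀ hq0 hq1 i.succ_ne_zero
    linarith

lemma one_sub_pow_le_qpFin_self (hq0 : 0 ≤ q) (hq1 : q < 1) (k : ℕ) :
    (1 - q) ^ k ≤ qpFin q q k := by
  calc (1 - q) ^ k = ∏ _i ∈ range k, (1 - q) := by rw [prod_const, card_range]
    _ ≤ qpFin q q k := prod_le_prod (fun _ _ => by linarith) fun i _ =>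
      sub_le_sub_left (mul_le_of_le_one_right hq0 (pow_le_one₀ hq0 hq1.le)) 1

/-- The Gaussian binomial `[n, k]_q = (q^{n-k+1};q)_k / (q;q)_k`. For `k > n` the factor `i = n`
of the numerator is `1 - q^0`, so truncated subtraction gives the correct value `0`. -/
noncomputable def qBinom (q : ℝ) (n k : ℕ) : ℝ := (∏ i ∈ range k, (1 - q ^ (n - i))) / qpFin q q k

@[simp]
lemma qBinom_zero_right (n : ℕ) : qBinom q n 0 = 1 := by simp [qBinom, qpFin]

lemma qBinom_eq_zero_of_lt {n k : ℕ} (h : n < k) : qBinom q n k = 0 := by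
  rw [qBinom, prod_eq_zero (mem_range.2 h) (by simp), zero_div]

lemma qBinom_succ_succ (hq0 : 0 ≤ q) (hq1 : q < 1) (n k : ℕ) :
    qBinom q (n + 1) (k + 1) = q ^ (k + 1) * qBinom q n (k + 1) + qBinom q n k := by
  rcases lt_or_ge n k with hnk | hkn
  · simp [qBinom_eq_zero_of_lt, hnk, Nat.lt_succ_of_lt hnk]
  have hnum_succ : ∏ i ∈ range (k + 1), (1 - q ^ (n + 1 - i)) =
      (∏ i ∈ range k, (1 - q ^ (n - i))) * (1 - q ^ (n + 1)) := by
    simp only [prod_range_succ', Nat.add_sub_add_right, Nat.sub_zero]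
  have hpow : q ^ (n + 1) = q ^ (k + 1) * q ^ (n - k) := by rw [← pow_add]; congr 1; omega
  have hden := (qpFin_self_pos hq0 hq1 k).ne'
  have hfac : 1 - q * q ^ k ≠ 0 := by
    rw [← pow_succ']; exact sub_ne_zero.2 (pow_lt_one₀ hq0 hq1 k.succ_ne_zero).ne'
  rw [qBinom, qBinom, qBinom, hnum_succ, prod_range_succ, qpFin, prod_range_succ, ← qpFin, hpow]
  field_simp
  ring

lemma tendsto_qBinom (hq0 : 0 ≤ q) (hq1 : q < 1) (k : ℕ) :
    Tendsto (fun n => qBinom q n k) atTop (𝓝 (qpFin q q k)⁻¹) := by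
  have hpow (i : ℕ) : Tendsto (fun n => q ^ (n - i)) atTop (𝓝 0) :=
    (tendsto_pow_atTop_nhds_zero_of_lt_one hq0 hq1).comp (tendsto_sub_atTop_nat i)
  have hnum : Tendsto (fun n => ∏ i ∈ range k, (1 - q ^ (n - i))) atTop (𝓝 1) := by
    simpa using tendsto_finsetProd (range k) fun i _ => (hpow i).const_sub 1
  simpa [qBinom, div_eq_mul_inv] using hnum.mul_const (qpFin q q k)⁻¹

lemma abs_qBinom_le (hq0 : 0 ≤ q) (hq1 : q < 1) (n k : ℕ) :
    |qBinom q n k| ≤ ((1 - q) ^ k)⁻¹ := by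
  have hfac (i : ℕ) : 0 ≤ 1 - q ^ (n - i) ∧ 1 - q ^ (n - i) ≤ 1 :=
    ⟨sub_nonneg.2 (pow_le_one₀ hq0 hq1.le), sub_le_self _ (pow_nonneg hq0 _)⟩
  have hnum : |∏ i ∈ range k, (1 - q ^ (n - i))| ≤ 1 := by
    rw [abs_of_nonneg (prod_nonneg fun i _ => (hfac i).1)]
    exact prod_le_one (fun i _ => (hfac i).1) fun i _ => (hfac i).2
  rw [qBinom, abs_div, abs_of_pos (qpFin_self_pos hq0 hq1 k), div_eq_mul_inv]
  simpa using mul_le_mul hnum (inv_anti₀ (pow_pos (by linarith) k)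
    (one_sub_pow_le_qpFin_self hq0 hq1 k))
    (inv_nonneg.2 (qpFin_self_pos hq0 hq1 k).le) zero_le_one

lemma sum_qBinom_mul_qpFin_succ (hq0 : 0 ≤ q) (hq1 : q < 1) (n : ℕ) (b : ℝ) :
    ∑ k ∈ range (n + 2), qBinom q (n + 1) k * b ^ k * q ^ (k * k) *
        qpFin q (b * q ^ (k + 1)) (n + 1 - k) =
      ∑ k ∈ range (n + 1), qBinom q n k * (q * b) ^ k * q ^ (k * k) *
        qpFin q (q * b * q ^ (k + 1)) (n - k) := by
  set P : ℕ → ℝ := fun k => q ^ k * qBinom q n k * b ^ k * q ^ (k * k) *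
    qpFin q (b * q ^ (k + 1)) (n + 1 - k) with hP
  set R : ℕ → ℝ := fun k => qBinom q n k * b ^ (k + 1) * q ^ ((k + 1) * (k + 1)) *
    qpFin q (b * q ^ (k + 2)) (n - k) with hR
  have hpascal (k : ℕ) : qBinom q (n + 1) (k + 1) * b ^ (k + 1) * q ^ ((k + 1) * (k + 1)) *
      qpFin q (b * q ^ (k + 1 + 1)) (n + 1 - (k + 1)) = P (k + 1) + R k := by
    simp only [hP, hR, qBinom_succ_succ hq0 hq1, Nat.add_sub_add_right]
    ring
  have hshift (k : ℕ) (hk : k ∈ range (n + 1)) :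
      P k + R k = qBinom q n k * (q * b) ^ k * q ^ (k * k) *
        qpFin q (q * b * q ^ (k + 1)) (n - k) := by
    have hkn : n + 1 - k = n - k + 1 := by have := mem_range.1 hk; omega
    simp only [hP, hR, hkn, qpFin_succ', show b * q ^ (k + 1) * q = b * q ^ (k + 2) by ring,
      show q * b * q ^ (k + 1) = b * q ^ (k + 2) by ring]
    ring
  have hP_top : P (n + 1) = 0 := by simp [hP, qBinom_eq_zero_of_lt]
  calc _ = ∑ k ∈ range (n + 1), (P (k + 1) + R k) + P 0 := by
        rw [sum_range_succ', sum_congr rfl fun k _ => hpascal k]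
        simp [hP]
    _ = ∑ k ∈ range (n + 2), P k + ∑ k ∈ range (n + 1), R k := by
        rw [sum_add_distrib, sum_range_succ' P]
        ring
    _ = ∑ k ∈ range (n + 1), (P k + R k) := by
        rw [sum_range_succ, hP_top, add_zero, sum_add_distrib]
    _ = _ := sum_congr rfl hshift

lemma sum_qBinom_mul_qpFin (hq0 : 0 ≤ q) (hq1 : q < 1) (n : ℕ) (b : ℝ) :
    ∑ k ∈ range (n + 1), qBinom q n k * b ^ k * q ^ (k * k) * qpFin q (b * q ^ (k + 1)) (n - k) =
      1 := by
  induction n generalizing b with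
  | zero => simp [qpFin]
  | succ n ih => rw [sum_qBinom_mul_qpFin_succ hq0 hq1, ih]

lemma summable_pow_mul_pow_mul_self (hq : |q| < 1) (a : ℝ) :
    Summable fun k : ℕ => a ^ k * q ^ (k * k) := by
  have hsmall : ∀ᶠ k : ℕ in atTop, ‖a * q ^ k‖ ≤ 2⁻¹ := by
    have := (tendsto_pow_atTop_nhds_zero_of_abs_lt_one hq).const_mul a
    rw [mul_zero] at this
    exact this.norm.eventually (ge_mem_nhds (by norm_num [norm_zero]))
  refine summable_geometric_two.of_norm_bounded_eventually_nat ?_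
  filter_upwards [hsmall] with k hk
  rw [pow_mul, ← mul_pow, norm_pow, one_div]
  exact pow_le_pow_left₀ (norm_nonneg _) hk k

lemma tsum_pow_mul_qpR_div_qpFin (hq0 : 0 ≤ q) (hq1 : q < 1) (b : ℝ) :
    ∑' k : ℕ, b ^ k * q ^ (k * k) * qpR q (b * q ^ (k + 1)) / qpFin q q k = 1 := by
  have hq : |q| < 1 := by rwa [abs_of_nonneg hq0]
  set g : ℕ → ℕ → ℝ := fun n k =>
    qBinom q n k * b ^ k * q ^ (k * k) * qpFin q (b * q ^ (k + 1)) (n - k) with hg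
  have hg_tsum (n : ℕ) : ∑' k, g n k = 1 := by
    rw [tsum_eq_sum (s := range (n + 1)), ← sum_qBinom_mul_qpFin hq0 hq1 n b]
    intro k hk
    simp [hg, qBinom_eq_zero_of_lt (not_lt.1 (mt mem_range.2 hk))]
  have hg_lim (k : ℕ) : Tendsto (g · k) atTop
      (𝓝 (b ^ k * q ^ (k * k) * qpR q (b * q ^ (k + 1)) / qpFin q q k)) := by
    have := (((tendsto_qBinom hq0 hq1 k).mul_const (b ^ k * q ^ (k * k))).mul
      ((tendsto_qpFin hq (b * q ^ (k + 1))).comp (tendsto_sub_atTop_nat k)))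
    convert this using 2 with n
    · simp only [hg, Function.comp_apply]; ring
    · ring
  set C := Real.exp (|b| / (1 - q))
  have hg_bound (n k : ℕ) : ‖g n k‖ ≤ C * ((|b| / (1 - q)) ^ k * q ^ (k * k)) := by
    have hpos : 0 < 1 - q := by linarith
    calc ‖g n k‖ =
          |qBinom q n k| * |b| ^ k * q ^ (k * k) * |qpFin q (b * q ^ (k + 1)) (n - k)| := by
          simp [hg, abs_of_nonneg hq0]
      _ ≤ ((1 - q) ^ k)⁻¹ * |b| ^ k * q ^ (k * k) * C := by
          gcongr
          · exact abs_qBinom_le hq0 hq1 n k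
          · refine (abs_qpFin_le hq0 hq1 _ _).trans
              (Real.exp_le_exp.2 (div_le_div_of_nonneg_right ?_ hpos.le))
            rw [abs_mul, abs_of_nonneg (pow_nonneg hq0 _)]
            exact mul_le_of_le_one_right (abs_nonneg b) (pow_le_one₀ hq0 hq1.le)
      _ = C * ((|b| / (1 - q)) ^ k * q ^ (k * k)) := by rw [div_pow]; ring
  have := tendsto_tsum_of_dominated_convergence
    ((summable_pow_mul_pow_mul_self hq _).mul_left C) hg_lim (.of_forall hg_bound)
  simp only [hg_tsum] at this
  exact tendsto_nhds_unique this tendsto_const_nhds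

lemma tsum_pow_mul_qpR_mul_qpR (hq0 : 0 ≤ q) (hq1 : q < 1) (b : ℝ) :
    ∑' k : ℕ, b ^ k * q ^ (k * k) * qpR q (b * q ^ (k + 1)) * qpR q (q ^ (k + 1)) = qpR q q := by
  have hterm (k : ℕ) : b ^ k * q ^ (k * k) * qpR q (b * q ^ (k + 1)) * qpR q (q ^ (k + 1)) =
      b ^ k * q ^ (k * k) * qpR q (b * q ^ (k + 1)) / qpFin q q k * qpR q q := by
    have hsplit := qpR_eq_qpFin_mul (by rwa [abs_of_nonneg hq0]) q k
    rw [← pow_succ'] at hsplit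
    field_simp [(qpFin_self_pos hq0 hq1 k).ne']
    rw [hsplit]
    ring
  rw [tsum_congr hterm, tsum_mul_right, tsum_pow_mul_qpR_div_qpFin hq0 hq1, one_mul]

end

theorem normalized_weight_integral_general (q : ℝ) (hq0 : 0 < q) (hq1 : q < 1) (c d : ℝ) :
    (∑' k : ℕ, 1 / (c * q ^ k) *
        ((c / d) ^ k * q ^ (k * (k + 1)) * qpR q (c * q ^ (k + 1) / d) * qpR q (q ^ (k + 1)))) =
      qpR q q / c := by
  have hsummand (k : ℕ) : 1 / (c * q ^ k) *
      ((c / d) ^ k * q ^ (k * (k + 1)) * qpR q (c * q ^ (k + 1) / d) * qpR q (q ^ (k + 1))) =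
      c⁻¹ * ((c / d) ^ k * q ^ (k * k) * qpR q (c / d * q ^ (k + 1)) * qpR q (q ^ (k + 1))) := by
    have hqk : q ^ k ≠ 0 := pow_ne_zero k hq0.ne'
    rw [one_div, mul_inv, mul_add, pow_add, mul_div_right_comm, mul_one]
    field_simp
  rw [tsum_congr hsummand, tsum_mul_left, tsum_pow_mul_qpR_mul_qpR hq0.le hq1, inv_mul_eq_div]

/-- Evaluation of the normalized q-integral `∫_{I_q} W(x) d_q x = ((1-q)/c)(q;q)_∞`. -/
theorem normalized_weight_integral (q : ℝ) (hq0 : 0 < q) (hq1 : q < 1) (c d : ℝ)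
    (hc : 0 < c) (hd : 0 < d) (hcd : ∀ k : ℤ, c / d ≠ q ^ k) :
    (∑' k : ℕ, 1 / (c * q ^ k) *
        ((c / d) ^ k * q ^ (k * (k + 1)) * qpR q (c * q ^ (k + 1) / d) * qpR q (q ^ (k + 1)))) =
      qpR q q / c :=
  normalized_weight_integral_general q hq0 hq1 c d
end
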